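/- Let $V$ and $W$ be finite-dimensional complex vector spaces each equipped with a linear $\mathbb{C}^\times$-action with only positive weights (i.e., $V = \bigoplus V_i$, $W = \bigoplus W_j$ with $t$ acting by $t^i$, $t^j$, all $i,j \geq 1$). Let $f : V \to W$ be a $\mathbb{C}^\times$-equivariant polynomial map with $f^{-1}(0) = \{0\}$ and whose image is Zariski dense in $W$. Then $f$ is surjective. -/

import Mathlib

open MvPolynomial

/-- Evaluation agrees with `aeval` over `ℂ`. -/
private lemma aeval_eq_eval' {m : ℕ} (v : Fin m → ℂ) (p : MvPolynomial (Fin m) ℂ) :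
    (aeval v) p = eval v p := by
  rw [aeval_eq_eval₂Hom]
  simp only [Algebra.algebraMap_self]
  rfl

/-- Substituting `X i ↦ t^(a i) • X i` scales a monomial by `t ^ (weighted degree)`. -/
private lemma scale_monomial {m : ℕ} (a : Fin m → ℕ) (t : ℂ) (d : Fin m →₀ ℕ) (r : ℂ) :
    bind₁ (fun i => (C (t ^ a i) * X i : MvPolynomial (Fin m) ℂ)) (monomial d r)
      = monomial d (t ^ (Finsupp.weight a d) * r) := by
  rw [bind₁_monomial]
  have h1 : ∀ i ∈ d.support, (C (t ^ a i) * X i : MvPolynomial (Fin m) ℂ) ^ d i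
      = C ((t ^ (a i)) ^ d i) * X i ^ d i := by
    intro i _
    rw [mul_pow, ← map_pow]
  rw [Finset.prod_congr rfl h1, Finset.prod_mul_distrib, ← map_prod]
  have h2 : (∏ i ∈ d.support, (t ^ a i) ^ d i) = t ^ (Finsupp.weight a d : ℕ) := by
    calc (∏ i ∈ d.support, (t ^ a i) ^ d i) = ∏ i ∈ d.support, t ^ (d i * a i) := by
            refine Finset.prod_congr rfl fun i _ => ?_
            rw [← pow_mul, mul_comm]
      _ = t ^ ∑ i ∈ d.support, d i * a i := Finset.prod_pow_eq_pow_sum _ _ _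
      _ = t ^ (Finsupp.weight a d : ℕ) := by
            congr 1
  rw [h2, monomial_eq, map_mul, Finsupp.prod]
  ring

private lemma coeff_scale {m : ℕ} (a : Fin m → ℕ) (t : ℂ) (P : MvPolynomial (Fin m) ℂ)
    (d : Fin m →₀ ℕ) :
    coeff d (bind₁ (fun i => (C (t ^ a i) * X i : MvPolynomial (Fin m) ℂ)) P)
      = t ^ (Finsupp.weight a d) * coeff d P := by
  induction P using MvPolynomial.induction_on' with
  | monomial u r =>
      rw [scale_monomial]
      classical
      simp only [coeff_monomial]
      by_cases h : u = d
      · subst h; simp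
      · simp [h]
  | add p q hp hq => rw [map_add, coeff_add, hp, hq, coeff_add, mul_add]

/-- Equivariance implies weighted homogeneity. -/
private lemma hom_of_equiv {m : ℕ} (a : Fin m → ℕ) (bj : ℕ) (P : MvPolynomial (Fin m) ℂ)
    (h : ∀ t : ℂ, t ≠ 0 → ∀ v : Fin m → ℂ,
      eval (fun i => t ^ a i * v i) P = t ^ bj * eval v P) :
    P.IsWeightedHomogeneous a bj := by
  intro d hd
  have key : ∀ t : ℂ, t ≠ 0 →
      bind₁ (fun i => (C (t ^ a i) * X i : MvPolynomial (Fin m) ℂ)) P = C (t ^ bj) * P := by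
    intro t ht
    apply MvPolynomial.funext
    intro v
    have h1 : eval v (bind₁ (fun i => (C (t ^ a i) * X i : MvPolynomial (Fin m) ℂ)) P)
        = eval (fun i => t ^ a i * v i) P := by
      rw [← aeval_eq_eval', aeval_bind₁]
      have harg : (fun i => (aeval v) ((C (t ^ a i) * X i : MvPolynomial (Fin m) ℂ)))
          = fun i => t ^ a i * v i := by
        funext i
        simp
      rw [harg, aeval_eq_eval']
    rw [h1, h t ht v, eval_mul, eval_C]
  have h2 := congrArg (coeff d) (key 2 two_ne_zero)
  rw [coeff_scale, coeff_C_mul] at h2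
  have h3 : (2 : ℂ) ^ (Finsupp.weight a d : ℕ) = 2 ^ bj := by
    exact mul_right_cancel₀ hd h2
  have h4 : ((2 ^ (Finsupp.weight a d : ℕ) : ℕ) : ℂ) = ((2 ^ bj : ℕ) : ℂ) := by
    push_cast
    exact h3
  exact Nat.pow_right_injective (by norm_num) (Nat.cast_injective h4)

/-- Weighted homogeneous component of a product with a homogeneous polynomial. -/
private lemma comp_mul {m : ℕ} (a : Fin m → ℕ) {e : ℕ} {Pj : MvPolynomial (Fin m) ℂ}
    (hPj : Pj.IsWeightedHomogeneous a e) (dd : ℕ) (g : MvPolynomial (Fin m) ℂ) :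
    weightedHomogeneousComponent a dd (g * Pj)
      = (if e ≤ dd then weightedHomogeneousComponent a (dd - e) g else 0) * Pj := by
  induction g using MvPolynomial.induction_on' with
  | monomial u r =>
      have hmon : (monomial u r : MvPolynomial (Fin m) ℂ).IsWeightedHomogeneous a
          (Finsupp.weight a u) := isWeightedHomogeneous_monomial _ _ _ rfl
      have hprod := hmon.mul hPj
      by_cases hcase : (Finsupp.weight a u : ℕ) + e = dd
      · rw [← hcase]
        rw [hprod.weightedHomogeneousComponent_same]
        rw [if_pos (Nat.le_add_left e _), Nat.add_sub_cancel]
        rw [hmon.weightedHomogeneousComponent_same]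
      · rw [hprod.weightedHomogeneousComponent_ne dd (Ne.symm hcase)]
        by_cases he : e ≤ dd
        · rw [if_pos he]
          have : (dd - e : ℕ) ≠ Finsupp.weight a u := by
            intro hcon
            apply hcase
            omega
          rw [hmon.weightedHomogeneousComponent_ne _ this, zero_mul]
        · rw [if_neg he, zero_mul]
  | add p q hp hq =>
      rw [add_mul, map_add, hp, hq, map_add]
      by_cases he : e ≤ dd <;> simp [he, add_mul]

theorem statement1 (m n : ℕ) (a : Fin m → ℕ) (b : Fin n → ℕ)
    (ha : ∀ i, 1 ≤ a i) (hb : ∀ j, 1 ≤ b j)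
    (f : (Fin m → ℂ) → (Fin n → ℂ))
    (hpoly : ∃ P : Fin n → MvPolynomial (Fin m) ℂ,
      ∀ v j, f v j = MvPolynomial.eval v (P j))
    (hequiv : ∀ (t : ℂ), t ≠ 0 → ∀ v : Fin m → ℂ,
      f (fun i => t ^ a i * v i) = fun j => t ^ b j * f v j)
    (hzero : ∀ v, f v = 0 → v = 0)
    (hdense : ∀ q : MvPolynomial (Fin n) ℂ,
      (∀ v, MvPolynomial.eval (f v) q = 0) → q = 0) :
    Function.Surjective f := by
  classical
  obtain ⟨P, hP⟩ := hpoly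
  -- each P j is weighted homogeneous of degree b j
  have hhom : ∀ j, (P j).IsWeightedHomogeneous a (b j) := by
    intro j
    apply hom_of_equiv
    intro t ht v
    have := congrFun (hequiv t ht v) j
    rw [hP, hP] at this
    exact this
  set φ : MvPolynomial (Fin n) ℂ →ₐ[ℂ] MvPolynomial (Fin m) ℂ := bind₁ P with hφdef
  have hevalφ : ∀ (v : Fin m → ℂ) (q : MvPolynomial (Fin n) ℂ),
      eval v (φ q) = eval (f v) q := by
    intro v q
    rw [hφdef, ← aeval_eq_eval', aeval_bind₁]
    have harg : (fun j => (aeval v) (P j)) = f v := by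
      funext j
      rw [aeval_eq_eval', hP]
    rw [harg, aeval_eq_eval']
  -- Nullstellensatz : powers of variables lie in the ideal generated by the P j
  set I : Ideal (MvPolynomial (Fin m) ℂ) := Ideal.span (Set.range P) with hIdef
  have hXmem : ∀ i, ∃ k, (X i : MvPolynomial (Fin m) ℂ) ^ k ∈ I := by
    intro i
    have hrad : (X i : MvPolynomial (Fin m) ℂ) ∈ I.radical := by
      rw [← vanishingIdeal_zeroLocus_eq_radical (K := ℂ)]
      rw [mem_vanishingIdeal_iff]
      intro x hx
      have hfx : f x = 0 := by
        funext j
        rw [hP, ← aeval_eq_eval']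
        exact (mem_zeroLocus_iff.mp hx) (P j) (Ideal.subset_span ⟨j, rfl⟩)
      have hx0 : x = 0 := hzero x hfx
      rw [aeval_X, hx0]
      rfl
    exact Ideal.mem_radical_iff.mp hrad
  choose N hN using hXmem
  -- module structure of R over A via φ
  letI : Algebra (MvPolynomial (Fin n) ℂ) (MvPolynomial (Fin m) ℂ) := φ.toRingHom.toAlgebra
  have hsmul : ∀ (q : MvPolynomial (Fin n) ℂ) (r : MvPolynomial (Fin m) ℂ),
      q • r = φ q * r := fun q r => rfl
  set Nf : Fin m →₀ ℕ := Finsupp.equivFunOnFinite.symm N with hNf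
  set G : Finset (MvPolynomial (Fin m) ℂ) :=
    (Finset.Iic Nf).image (fun μ => monomial μ 1) with hG
  set M : Submodule (MvPolynomial (Fin n) ℂ) (MvPolynomial (Fin m) ℂ) :=
    Submodule.span (MvPolynomial (Fin n) ℂ) (G : Set (MvPolynomial (Fin m) ℂ)) with hM
  have helper : ∀ p : MvPolynomial (Fin m) ℂ,
      (∀ d ∈ p.support, (monomial d 1 : MvPolynomial (Fin m) ℂ) ∈ M) → p ∈ M := by
    intro p hp
    rw [p.as_sum]
    refine Submodule.sum_mem M fun d hd => ?_
    have heq : (monomial d (coeff d p) : MvPolynomial (Fin m) ℂ)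
        = (C (coeff d p) : MvPolynomial (Fin n) ℂ) • (monomial d 1 : MvPolynomial (Fin m) ℂ) := by
      rw [hsmul, hφdef, bind₁_C_right, C_mul_monomial, mul_one]
    rw [heq]
    exact M.smul_mem _ (hp d hd)
  have claim : ∀ dtot : ℕ, ∀ μ : Fin m →₀ ℕ, (Finsupp.weight a μ : ℕ) = dtot →
      (monomial μ 1 : MvPolynomial (Fin m) ℂ) ∈ M := by
    intro dtot
    induction dtot using Nat.strong_induction_on with
    | _ dtot IH =>
    intro μ hμ
    by_cases hcase : μ ≤ Nf
    · apply Submodule.subset_span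
      exact Finset.mem_coe.mpr (Finset.mem_image.mpr ⟨μ, Finset.mem_Iic.mpr hcase, rfl⟩)
    · rw [Finsupp.le_def] at hcase
      push_neg at hcase
      obtain ⟨i, hi⟩ := hcase
      have hNfi : Nf i = N i := by rw [hNf]; rfl
      have hle : Finsupp.single i (N i) ≤ μ := by
        rw [Finsupp.single_le_iff]
        rw [hNfi] at hi
        exact le_of_lt hi
      set β := μ - Finsupp.single i (N i) with hβ
      have hmon : (monomial μ 1 : MvPolynomial (Fin m) ℂ) = monomial β 1 * X i ^ N i := by
        rw [X_pow_eq_monomial, monomial_mul, one_mul, hβ, tsub_add_cancel_of_le hle]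
      obtain ⟨c, hc⟩ := Ideal.mem_span_range_iff_exists_fun.mp (hN i)
      have hexp : (monomial μ 1 : MvPolynomial (Fin m) ℂ)
          = ∑ j, (monomial β 1 * c j) * P j := by
        rw [hmon, ← hc, Finset.mul_sum]
        refine Finset.sum_congr rfl fun j _ => ?_
        ring
      have hμhom : (monomial μ 1 : MvPolynomial (Fin m) ℂ).IsWeightedHomogeneous a dtot :=
        isWeightedHomogeneous_monomial _ _ _ hμ
      have hcomp := congrArg (weightedHomogeneousComponent a dtot) hexp
      rw [hμhom.weightedHomogeneousComponent_same, map_sum] at hcomp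
      rw [hcomp]
      refine Submodule.sum_mem M fun j _ => ?_
      rw [comp_mul a (hhom j)]
      by_cases hbj : b j ≤ dtot
      · rw [if_pos hbj]
        set g := weightedHomogeneousComponent a (dtot - b j) (monomial β 1 * c j) with hg
        have hdlt : dtot - b j < dtot := by
          have h1 : 1 ≤ b j := hb j
          omega
        have hgM : g ∈ M := by
          apply helper
          intro dsup hdsup
          exact IH (dtot - b j) hdlt dsup
            ((weightedHomogeneousComponent_isWeightedHomogeneous (dtot - b j) _)
              (mem_support_iff.mp hdsup))
        have hsw : g * P j = (X j : MvPolynomial (Fin n) ℂ) • g := by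
          rw [hsmul, hφdef, bind₁_X_right, mul_comm]
        rw [hsw]
        exact M.smul_mem _ hgM
      · rw [if_neg hbj, zero_mul]
        exact M.zero_mem
  haveI hfin : Module.Finite (MvPolynomial (Fin n) ℂ) (MvPolynomial (Fin m) ℂ) := by
    refine ⟨⟨G, ?_⟩⟩
    rw [eq_top_iff]
    intro p _
    exact helper p (fun d _ => claim _ d rfl)
  haveI hint : Algebra.IsIntegral (MvPolynomial (Fin n) ℂ) (MvPolynomial (Fin m) ℂ) :=
    Algebra.IsIntegral.of_finite _ _
  intro w
  set Pw : Ideal (MvPolynomial (Fin n) ℂ) := vanishingIdeal ℂ {w} with hPw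
  haveI : Pw.IsMaximal := inferInstance
  have hker : RingHom.ker (algebraMap (MvPolynomial (Fin n) ℂ) (MvPolynomial (Fin m) ℂ)) ≤ Pw := by
    intro q hq
    rw [RingHom.mem_ker] at hq
    have hq0 : q = 0 := by
      apply hdense
      intro v
      rw [← hevalφ v q]
      have : φ q = 0 := hq
      rw [this, map_zero]
    rw [hq0]
    exact Pw.zero_mem
  obtain ⟨Q, hQmax, hQcomap⟩ := Ideal.exists_ideal_over_maximal_of_isIntegral Pw hker
  obtain ⟨v, rfl⟩ := isMaximal_iff_eq_vanishingIdeal_singleton.mp hQmax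
  refine ⟨v, funext fun j => ?_⟩
  have hq : (X j - C (w j) : MvPolynomial (Fin n) ℂ) ∈ Pw := by
    rw [hPw, mem_vanishingIdeal_iff]
    intro x hx
    rw [Set.mem_singleton_iff] at hx
    subst hx
    simp
  rw [← hQcomap, Ideal.mem_comap] at hq
  rw [mem_vanishingIdeal_iff] at hq
  have := hq v rfl
  have heval : eval v (algebraMap (MvPolynomial (Fin n) ℂ) (MvPolynomial (Fin m) ℂ)
      (X j - C (w j))) = eval (f v) (X j - C (w j)) := hevalφ v _
  rw [aeval_eq_eval', heval] at this
  simp only [eval_sub, eval_X, eval_C] at this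
  exact sub_eq_zero.mp this
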